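/- arXiv:1909.02193 — 2 statements merged into one kernel-verified Lean document; each statement's English description precedes it below -/
import Mathlib

section
/- For fixed b > 0 and c > 0, the function f(a,b,c) = e^{-a/b} ∑_{i=0}^∞ ((a/b)^i / i!) · γ(1+i, c/b)/Γ(1+i), where γ is the lower incomplete gamma function, is strictly decreasing in a on [0, ∞). -/
/-!
With `x = a / b` and `y = c / b`, `outageF a b c` is the Poisson(`x`) mean of the sequence
`g i = γ(1 + i, y) / i!`, which is nonnegative and, by the recurrence
`γ(p + 1, y) = p γ(p, y) - e^{-y} y^p`, strictly decreasing. Such a Poisson mean strictly decreases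
in the rate: by the binomial theorem Poisson(`x + d`) is the convolution of Poisson(`x`) and
Poisson(`d`), so the mean at `x + d` is the double sum of `g (i + j)` against product weights, and
replacing `g (i + j)` by the larger `g i` gives back the mean at `x`; the term `i = 0`, `j = 1`
makes the inequality strict.
-/

open Real

/-- Lower incomplete gamma function γ(p, x) = ∫_0^x t^(p-1) e^(-t) dt. -/
noncomputable def lowerIncGamma (p x : ℝ) : ℝ := ∫ t in (0:ℝ)..x, t ^ (p - 1) * Real.exp (-t)

/-- f(a,b,c) = e^{-a/b} ∑_{i=0}^∞ ((a/b)^i / i!) γ(1+i, c/b)/Γ(1+i), with Γ(1+i) = i!. -/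
noncomputable def outageF (a b c : ℝ) : ℝ :=
  Real.exp (-(a / b)) *
    ∑' i : ℕ, ((a / b) ^ i / (Nat.factorial i)) *
      (lowerIncGamma (1 + i) (c / b) / (Nat.factorial i))

open Finset Set

theorem add_pow_div_factorial {K : Type*} [Field K] [CharZero K] (x y : K) (n : ℕ) :
    (x + y) ^ n / n.factorial =
      ∑ p ∈ antidiagonal n, x ^ p.1 / p.1.factorial * (y ^ p.2 / p.2.factorial) := by
  rw [(Commute.all x y).add_pow', sum_div]
  refine sum_congr rfl fun ⟨i, j⟩ hij => ?_
  obtain rfl : i + j = n := mem_antidiagonal.mp hij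
  have hfac : ((i + j).choose i * i.factorial * j.factorial : K) = (i + j).factorial := by
    rw [Nat.choose_symm_add]; exact_mod_cast Nat.add_choose_mul_factorial_mul_factorial i j
  have hchoose : ((i + j).choose i : K) ≠ 0 :=
    Nat.cast_ne_zero.mpr (Nat.choose_pos (Nat.le_add_right i j)).ne'
  rw [nsmul_eq_mul, ← hfac]
  field_simp

theorem tsum_prod_eq_tsum_sum_antidiagonal {α A : Type*} [AddCommMonoid α] [TopologicalSpace α]
    [ContinuousAdd α] [T3Space α] [AddMonoid A] [HasAntidiagonal A] {F : A × A → α}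
    (hF : Summable F) : ∑' p, F p = ∑' n, ∑ p ∈ antidiagonal n, F p := by
  simp_rw [← Finset.sum_finset_coe (fun p => F p), ← tsum_fintype (L := .unconditional _)]
  rw [← HasAntidiagonal.sigmaAntidiagonalEquivProd.tsum_eq F]
  exact (HasAntidiagonal.sigmaAntidiagonalEquivProd.summable_iff.mpr hF).tsum_sigma'
    fun n => (hasSum_fintype _).summable

theorem tsum_add_pow_div_factorial_mul {x y : ℝ} {g : ℕ → ℝ}
    (h : Summable fun p : ℕ × ℕ =>
      x ^ p.1 / p.1.factorial * (y ^ p.2 / p.2.factorial) * g (p.1 + p.2)) :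
    ∑' n, (x + y) ^ n / n.factorial * g n =
      ∑' p : ℕ × ℕ, x ^ p.1 / p.1.factorial * (y ^ p.2 / p.2.factorial) * g (p.1 + p.2) := by
  rw [tsum_prod_eq_tsum_sum_antidiagonal h]
  refine tsum_congr fun n => ?_
  rw [add_pow_div_factorial, sum_mul]
  refine sum_congr rfl fun p hp => ?_
  rw [mem_antidiagonal.mp hp]

theorem tsum_pow_div_factorial_eq_exp (x : ℝ) : ∑' n : ℕ, x ^ n / n.factorial = Real.exp x := by
  rw [Real.exp_eq_exp_ℝ]
  exact (NormedSpace.expSeries_div_hasSum_exp x).tsum_eq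

theorem summable_pow_div_factorial_mul {g : ℕ → ℝ} {x M : ℝ} (hx : 0 ≤ x) (hg0 : ∀ i, 0 ≤ g i)
    (hgM : ∀ i, g i ≤ M) : Summable fun i : ℕ => x ^ i / i.factorial * g i :=
  ((Real.summable_pow_div_factorial x).mul_right M).of_nonneg_of_le
    (fun i => by have := hg0 i; positivity)
    fun i => mul_le_mul_of_nonneg_left (hgM i) (by positivity)

noncomputable def poissonMean (g : ℕ → ℝ) (x : ℝ) : ℝ :=
  Real.exp (-x) * ∑' i : ℕ, x ^ i / i.factorial * g i

theorem poissonMean_strictAntiOn {g : ℕ → ℝ} (hg : StrictAnti g) (hg0 : ∀ i, 0 ≤ g i) :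
    StrictAntiOn (poissonMean g) (Ici 0) := by
  intro x (hx : 0 ≤ x) x' _ hxx'
  obtain ⟨y, hy, rfl⟩ : ∃ y, 0 < y ∧ x' = x + y := ⟨x' - x, by linarith, by ring⟩
  set u : ℕ → ℝ := fun i => x ^ i / i.factorial * g i
  set v : ℕ → ℝ := fun j => y ^ j / j.factorial
  have hu : Summable u := summable_pow_div_factorial_mul hx hg0 fun i => hg.antitone i.zero_le
  have hv : Summable v := Real.summable_pow_div_factorial y
  have huv : Summable fun p : ℕ × ℕ => u p.1 * v p.2 :=
    hu.mul_of_nonneg hv (fun i => by have := hg0 i; positivity) fun j => by positivity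
  have hshift (p : ℕ × ℕ) : x ^ p.1 / p.1.factorial * v p.2 * g (p.1 + p.2) ≤ u p.1 * v p.2 := by
    rw [mul_right_comm]
    exact mul_le_mul_of_nonneg_right
      (mul_le_mul_of_nonneg_left (hg.antitone (Nat.le_add_right _ _)) (by positivity))
      (by positivity)
  have hF : Summable fun p : ℕ × ℕ => x ^ p.1 / p.1.factorial * v p.2 * g (p.1 + p.2) :=
    huv.of_nonneg_of_le (fun p => by have := hg0 (p.1 + p.2); positivity) hshift
  have hlt : ∑' p : ℕ × ℕ, x ^ p.1 / p.1.factorial * v p.2 * g (p.1 + p.2)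
      < ∑' p : ℕ × ℕ, u p.1 * v p.2 := by
    refine hF.tsum_lt_tsum (i := (0, 1)) hshift ?_ huv
    simpa [u, v, mul_comm] using mul_lt_mul_of_pos_left (hg zero_lt_one) hy
  calc poissonMean g (x + y)
      = Real.exp (-(x + y)) * ∑' p : ℕ × ℕ, x ^ p.1 / p.1.factorial * v p.2 * g (p.1 + p.2) := by
        rw [poissonMean, tsum_add_pow_div_factorial_mul hF]
    _ < Real.exp (-(x + y)) * ((∑' i, u i) * ∑' j, v j) := by
        rw [hu.tsum_mul_tsum hv huv]
        exact mul_lt_mul_of_pos_left hlt (Real.exp_pos _)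
    _ = poissonMean g x := by
        rw [tsum_pow_div_factorial_eq_exp, mul_comm (∑' i, u i), ← mul_assoc, ← Real.exp_add,
          neg_add, neg_add_cancel_right, poissonMean]

theorem ofReal_lowerIncGamma (p : ℝ) {X : ℝ} (hX : 0 ≤ X) :
    (lowerIncGamma p X : ℂ) = Complex.partialGamma p X := by
  rw [lowerIncGamma, Complex.partialGamma, ← intervalIntegral.integral_ofReal]
  refine intervalIntegral.integral_congr fun t ht => ?_
  have ht : 0 ≤ t := by rw [uIcc_of_le hX] at ht; exact ht.1
  push_cast [Complex.ofReal_cpow ht]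
  ring

theorem lowerIncGamma_add_one {p X : ℝ} (hp : 0 < p) (hX : 0 ≤ X) :
    lowerIncGamma (p + 1) X = p * lowerIncGamma p X - Real.exp (-X) * X ^ p := by
  have h := Complex.partialGamma_add_one (s := p) (by simpa using hp) hX
  rw [← Complex.ofReal_one, ← Complex.ofReal_add, ← ofReal_lowerIncGamma _ hX,
    ← ofReal_lowerIncGamma _ hX, ← Complex.ofReal_cpow hX] at h
  exact_mod_cast h

theorem lowerIncGamma_nonneg (p : ℝ) {X : ℝ} (hX : 0 ≤ X) : 0 ≤ lowerIncGamma p X :=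
  intervalIntegral.integral_nonneg hX fun t ht => by have := ht.1; positivity

theorem strictAnti_lowerIncGamma_div_factorial {y : ℝ} (hy : 0 < y) :
    StrictAnti fun n : ℕ => lowerIncGamma (1 + n) y / n.factorial := by
  refine strictAnti_nat_of_succ_lt fun n => ?_
  have hrec : lowerIncGamma (1 + (n + 1 : ℕ)) y / (n + 1).factorial
      = lowerIncGamma (1 + n) y / n.factorial - Real.exp (-y) * y ^ (n + 1) / (n + 1).factorial := by
    rw [Nat.cast_succ, ← add_assoc, lowerIncGamma_add_one (by positivity) hy.le,
      Nat.factorial_succ, Nat.cast_mul, ← Real.rpow_natCast]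
    push_cast
    field_simp
    ring_nf
  rw [hrec, sub_lt_self_iff]
  positivity

theorem outageF_eq_poissonMean (a b c : ℝ) :
    outageF a b c = poissonMean (fun n => lowerIncGamma (1 + n) (c / b) / n.factorial) (a / b) :=
  rfl

theorem stmt0 (b c : ℝ) (hb : 0 < b) (hc : 0 < c) :
    StrictAntiOn (fun a => outageF a b c) (Set.Ici 0) := by
  have hy : 0 < c / b := div_pos hc hb
  have hmean := poissonMean_strictAntiOn (strictAnti_lowerIncGamma_div_factorial hy)
    fun n => div_nonneg (lowerIncGamma_nonneg _ hy.le) (Nat.cast_nonneg _)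
  intro a (ha : 0 ≤ a) a' (ha' : 0 ≤ a') h
  simp only [outageF_eq_poissonMean]
  exact hmean (div_nonneg ha hb.le) (div_nonneg ha' hb.le) (div_lt_div_of_pos_right h hb)
end

section
/- For fixed a ≥ 0, b > 0, and R > 0, let P(s) = f(a, b, (2^R − 1)/s) for s > 0, where f(a,b,c) = e^{-a/b} ∑_{i=0}^∞ ((a/b)^i/i!) · γ(1+i, c/b)/Γ(1+i). Then P(s) ~ ((2^R − 1)/(b s)) · e^{-a/b} as s → ∞, i.e., lim_{s→∞} P(s) · b s / ((2^R − 1) e^{-a/b}) = 1. -/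
open Real Filter

/-! The summand of index `i` is at most `|a/b|^i/i! · (c/b)^(i+1)`, because `γ(1+i, x) ≤ x^(i+1)`;
so as `c → 0` the summands with `i ≥ 1` contribute `O(c²)` in total, while the summand of index
`0` is `γ(1, c/b) = 1 - e^{-c/b} ~ c/b`. Hence `f(a, b, c) ~ e^{-a/b} c / b` as `c → 0⁺`, and
`c = (2^R - 1)/s → 0⁺` as `s → ∞`. -/

open Topology
open scoped Nat

lemma lowerIncGamma_one_add_natCast (i : ℕ) (x : ℝ) :
    lowerIncGamma (1 + i) x = ∫ t in (0:ℝ)..x, t ^ i * exp (-t) := by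
  simp only [lowerIncGamma, add_sub_cancel_left, rpow_natCast]

lemma lowerIncGamma_one (x : ℝ) : lowerIncGamma 1 x = 1 - exp (-x) := by
  simpa [sub_eq_neg_add] using lowerIncGamma_one_add_natCast 0 x

lemma lowerIncGamma_one_add_natCast_nonneg (i : ℕ) {x : ℝ} (hx : 0 ≤ x) :
    0 ≤ lowerIncGamma (1 + i) x := by
  rw [lowerIncGamma_one_add_natCast]
  exact intervalIntegral.integral_nonneg hx fun t ht => by have := ht.1; positivity

lemma lowerIncGamma_one_add_natCast_le_pow (i : ℕ) {x : ℝ} (hx : 0 ≤ x) :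
    lowerIncGamma (1 + i) x ≤ x ^ (i + 1) := by
  rw [lowerIncGamma_one_add_natCast]
  calc ∫ t in (0:ℝ)..x, t ^ i * exp (-t)
      ≤ ∫ _ in (0:ℝ)..x, x ^ i := by
        refine intervalIntegral.integral_mono_on hx
          (Continuous.intervalIntegrable (by fun_prop) _ _) intervalIntegrable_const
          fun t ht => ?_
        calc t ^ i * exp (-t) ≤ x ^ i * 1 :=
              mul_le_mul (pow_le_pow_left₀ ht.1 ht.2 i) (exp_le_one_iff.mpr (by linarith [ht.1]))
                (exp_pos _).le (pow_nonneg hx i)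
          _ = x ^ i := mul_one _
    _ = x ^ (i + 1) := by simp [pow_succ, mul_comm]

lemma tendsto_one_sub_exp_neg_div_nhdsGT :
    Tendsto (fun x => (1 - exp (-x)) / x) (𝓝[>] 0) (𝓝 1) := by
  have hderiv : HasDerivAt (fun t => 1 - exp (-t)) 1 0 := by
    simpa using ((hasDerivAt_neg (0:ℝ)).exp).const_sub 1
  refine hderiv.tendsto_slope_zero_right.congr fun x => ?_
  simp only [zero_add, neg_zero, exp_zero, smul_eq_mul]
  ring

noncomputable def outageTerm (q x : ℝ) (i : ℕ) : ℝ :=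
  q ^ i / i ! * (lowerIncGamma (1 + i) x / i !)

lemma outageF_eq_tsum (a b c : ℝ) :
    outageF a b c = exp (-(a / b)) * ∑' i, outageTerm (a / b) (c / b) i := rfl

lemma outageTerm_zero (q x : ℝ) : outageTerm q x 0 = 1 - exp (-x) := by
  simp [outageTerm, lowerIncGamma_one]

lemma abs_outageTerm_le (q : ℝ) {x : ℝ} (hx : 0 ≤ x) (i : ℕ) :
    |outageTerm q x i| ≤ |q| ^ i / i ! * x ^ (i + 1) := by
  have hγ := lowerIncGamma_one_add_natCast_nonneg i hx
  have hfact : (1 : ℝ) ≤ i ! := by exact_mod_cast i.factorial_pos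
  rw [outageTerm, abs_mul, abs_div, abs_pow, abs_of_nonneg (by positivity : (0:ℝ) ≤ i !),
    abs_of_nonneg (by positivity : 0 ≤ lowerIncGamma (1 + i) x / i !)]
  gcongr
  exact (div_le_self hγ hfact).trans (lowerIncGamma_one_add_natCast_le_pow i hx)

lemma summable_outageTerm (q : ℝ) {x : ℝ} (hx : 0 ≤ x) : Summable (outageTerm q x) := by
  refine .of_norm_bounded ((summable_pow_div_factorial (|q| * x)).mul_left x) fun i => ?_
  calc ‖outageTerm q x i‖ ≤ |q| ^ i / i ! * x ^ (i + 1) := abs_outageTerm_le q hx i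
    _ = x * ((|q| * x) ^ i / i !) := by ring

lemma abs_tsum_outageTerm_succ_le (q : ℝ) {x : ℝ} (hx₀ : 0 ≤ x) (hx₁ : x ≤ 1) :
    |∑' i, outageTerm q x (i + 1)| ≤ (∑' i : ℕ, |q| ^ (i + 1) / (i + 1)!) * x ^ 2 := by
  have hsum : Summable fun i : ℕ => |q| ^ (i + 1) / (i + 1)! :=
    (summable_pow_div_factorial |q|).comp_injective Nat.succ_injective
  rw [← Real.norm_eq_abs]
  refine tsum_of_norm_bounded (hsum.hasSum.mul_right (x ^ 2)) fun i => ?_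
  calc ‖outageTerm q x (i + 1)‖ ≤ |q| ^ (i + 1) / (i + 1)! * x ^ (i + 1 + 1) :=
        abs_outageTerm_le q hx₀ (i + 1)
    _ ≤ |q| ^ (i + 1) / (i + 1)! * x ^ 2 :=
        mul_le_mul_of_nonneg_left (pow_le_pow_of_le_one hx₀ hx₁ (by omega)) (by positivity)

lemma tendsto_tsum_outageTerm_div_nhdsGT (q : ℝ) :
    Tendsto (fun x => (∑' i, outageTerm q x i) / x) (𝓝[>] 0) (𝓝 1) := by
  set C := ∑' i : ℕ, |q| ^ (i + 1) / (i + 1)!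
  have hx : ∀ᶠ x in 𝓝[>] (0:ℝ), x ∈ Set.Ioo 0 1 := Ioo_mem_nhdsGT one_pos
  have htail : Tendsto (fun x => (∑' i, outageTerm q x (i + 1)) / x) (𝓝[>] 0) (𝓝 0) := by
    refine squeeze_zero_norm' ?_
      (((continuous_const_mul C).tendsto' 0 0 (mul_zero C)).mono_left nhdsWithin_le_nhds)
    · filter_upwards [hx] with x ⟨hx₀, hx₁⟩
      rw [norm_div, Real.norm_of_nonneg hx₀.le, div_le_iff₀ hx₀]
      calc ‖∑' i, outageTerm q x (i + 1)‖ ≤ C * x ^ 2 :=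
            abs_tsum_outageTerm_succ_le q hx₀.le hx₁.le
        _ = C * x * x := by ring
  refine (tendsto_one_sub_exp_neg_div_nhdsGT.add htail).congr' ?_ |>.trans (by simp)
  filter_upwards [hx] with x ⟨hx₀, _⟩
  rw [(summable_outageTerm q hx₀.le).tsum_eq_zero_add, outageTerm_zero, add_div]

theorem stmt9_general (a b R : ℝ) (hb : 0 < b) (hR : 0 < R) :
    Tendsto (fun s : ℝ =>
        outageF a b ((2 ^ R - 1) / s) / (((2 ^ R - 1) / (b * s)) * Real.exp (-(a / b))))
      atTop (nhds 1) := by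
  have hK : 0 < (2:ℝ) ^ R - 1 := sub_pos.mpr (one_lt_rpow one_lt_two hR)
  have hx : Tendsto (fun s : ℝ => (2 ^ R - 1) / (b * s)) atTop (𝓝[>] 0) :=
    tendsto_nhdsWithin_of_tendsto_nhds_of_eventually_within _
      (tendsto_const_nhds.div_atTop (tendsto_id.const_mul_atTop hb))
      ((eventually_gt_atTop 0).mono fun s hs => div_pos hK (mul_pos hb hs))
  refine ((tendsto_tsum_outageTerm_div_nhdsGT (a / b)).comp hx).congr fun s => ?_
  rw [Function.comp_apply, outageF_eq_tsum, div_div, mul_comm s b, mul_comm _ (exp _),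
    mul_div_mul_left _ _ (exp_ne_zero _)]

/-- High-SNR asymptotics: f(a, b, (2^R−1)/s) ~ ((2^R−1)/(b s)) e^{-a/b} as s → ∞. -/
theorem stmt9 (a b R : ℝ) (ha : 0 ≤ a) (hb : 0 < b) (hR : 0 < R) :
    Tendsto (fun s : ℝ =>
        outageF a b ((2 ^ R - 1) / s) / (((2 ^ R - 1) / (b * s)) * Real.exp (-(a / b))))
      atTop (nhds 1) :=
  stmt9_general a b R hb hR
end
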